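/- Let A be a commutative associative algebra over a field of characteristic 0 and let c be a Hochschild 2-cocycle on A whose symmetric part is a Hochschild coboundary. Then the antisymmetric part λ(f,g) = (1/2)(c(f,g) − c(g,f)) is a biderivation in its first argument, i.e. λ(fg, h) = f·λ(g,h) + λ(f,h)·g for all f,g,h ∈ A. -/
import Mathlib


/-- The antisymmetric part `λ(f,g) = (1/2)(c(f,g) − c(g,f))` of a 2-cochain. -/
def antisymPart {A : Type*} [CommRing A] [Algebra ℚ A] (c : A → A → A) (f g : A) : A :=
  (1 / 2 : ℚ) • (c f g - c g f)

private lemma halve {A : Type*} [CommRing A] [Algebra ℚ A] {x y : A}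
    (h : x + x = y + y) : x = y := by
  have : (1/2 : ℚ) • (x + x) = (1/2 : ℚ) • (y + y) := by rw [h]
  calc x = (1/2 : ℚ) • (x + x) := by rw [← two_smul ℚ x, smul_smul]; norm_num
  _ = (1/2 : ℚ) • (y + y) := this
  _ = y := by rw [← two_smul ℚ y, smul_smul]; norm_num

/-- Let `A` be a commutative associative algebra over a field of characteristic 0 and
`c` a Hochschild 2-cocycle on `A` whose symmetric part is a Hochschild coboundary.
Then the antisymmetric part `λ(f,g) = (1/2)(c(f,g) − c(g,f))` is a derivation in its
first argument: `λ(fg, h) = f·λ(g,h) + λ(f,h)·g`. -/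
theorem stmt16 {A : Type*} [CommRing A] [Algebra ℚ A] (c : A → A → A)
    (hcocycle : ∀ a b d : A, a * c b d - c (a * b) d + c a (b * d) - c a b * d = 0)
    (hsym : ∃ T : A → A, ∀ a b : A,
      (1 / 2 : ℚ) • (c a b + c b a) = a * T b - T (a * b) + T a * b) :
    ∀ f g h : A,
      antisymPart c (f * g) h = f * antisymPart c g h + antisymPart c f h * g := by
  obtain ⟨T, hT⟩ := hsym
  -- integral form of the symmetry hypothesis
  have cs : ∀ a b : A,
      c a b + c b a = 2 * (a * T b) - 2 * T (a * b) + 2 * (T a * b) := by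
    intro a b
    have h1 : (2 : ℚ) • ((1/2 : ℚ) • (c a b + c b a))
        = (2 : ℚ) • (a * T b - T (a * b) + T a * b) := by rw [hT a b]
    rw [smul_smul] at h1
    norm_num at h1
    rw [h1, two_smul, two_smul]
    ring
  intro f g h
  -- key identity (doubled, integer coefficients)
  have hD : (c (f*g) h - c h (f*g)) = f * (c g h - c h g) + (c f h - c h f) * g := by
    apply halve
    have e1 : c (f*g) h = c (g*f) h := by rw [mul_comm f g]
    have e2 : c (g*h) f = c (h*g) f := by rw [mul_comm g h]
    have e3 : c h (g*f) = c h (f*g) := by rw [mul_comm g f]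
    have e4 : c f (h*g) = c f (g*h) := by rw [mul_comm h g]
    have t1 : T (g*(h*f)) = T (g*h*f) := by rw [mul_assoc]
    have t2 : T (h*(f*g)) = T (h*f*g) := by rw [mul_assoc]
    have t3 : T (h*(g*f)) = T (h*g*f) := by rw [mul_assoc]
    linear_combination e1 + e2 + e3 + e4 + 2*t1 - 2*t2 - 2*t3 + 2 * (hcocycle g h f) - 2 * (hcocycle h f g) - 2 * (hcocycle h g f)
      - (g * (cs h f) - cs (g*h) f + cs g (h*f) - f * (cs g h))
      + (h * (cs f g) - cs (h*f) g + cs h (f*g) - g * (cs h f))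
      + (h * (cs g f) - cs (h*g) f + cs h (g*f) - f * (cs h g))
  simp only [antisymPart, mul_smul_comm, smul_mul_assoc, ← smul_add]
  exact congrArg _ (by linear_combination hD)
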